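/- Let μ ≥ 1, θ₀ = πμ/(2(2μ+1)), θ₁ = π(μ+1)/(2(2μ+1)), and φ ∈ (0, π/2). Define for natural numbers j₀, j₁ the quantity P(j₀,j₁) = cos²φ·cos^{2j₀}(θ₀)·sin^{2j₁}(θ₀) / (sin²φ·cos^{2j₀}(θ₁)·sin^{2j₁}(θ₁) + cos²φ·cos^{2j₀}(θ₀)·sin^{2j₁}(θ₀)). If j₀ = j₁ then P(j₀,j₁) = cos²φ. -/

import Mathlib

/-! The two angles are complementary, `θ₀ + θ₁ = π / 2`, so `cos θ₁ = sin θ₀` and `sin θ₁ = cos θ₀`.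
When `j₀ = j₁` both terms of the denominator therefore carry the same factor
`cos^{2j} θ₀ · sin^{2j} θ₀`, which is nonzero because `0 < θ₀ < π / 2`. It cancels against the
numerator, leaving `cos² φ / (sin² φ + cos² φ) = cos² φ`. -/

open Real Set

lemma mul_div_add_mul_of_add_eq_one {K : Type*} [Field K] {a b c : K} (hab : b + a = 1)
    (hc : c ≠ 0) : a * c / (b * c + a * c) = a := by
  rw [← add_mul, hab, one_mul, mul_div_cancel_right₀ a hc]

lemma cos_pow_mul_sin_pow_pi_div_two_sub (θ : ℝ) (n : ℕ) :
    cos (π / 2 - θ) ^ n * sin (π / 2 - θ) ^ n = cos θ ^ n * sin θ ^ n := by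
  rw [cos_pi_div_two_sub, sin_pi_div_two_sub, mul_comm]

lemma pi_mul_succ_div_eq_pi_div_two_sub (μ : ℕ) :
    π * (μ + 1) / (2 * (2 * μ + 1)) = π / 2 - π * μ / (2 * (2 * μ + 1)) := by
  field_simp
  ring

lemma pi_mul_div_mem_Ioo {μ : ℕ} (hμ : 1 ≤ μ) :
    π * μ / (2 * (2 * μ + 1)) ∈ Ioo 0 (π / 2) := by
  have hμ' : (1 : ℝ) ≤ μ := by exact_mod_cast hμ
  refine ⟨by positivity, ?_⟩
  rw [div_lt_div_iff₀ (by positivity) two_pos]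
  nlinarith [pi_pos]

theorem reversal_general (μ : ℕ) (hμ : 1 ≤ μ)
    (θ₀ θ₁ : ℝ)
    (h0 : θ₀ = Real.pi * μ / (2 * (2 * μ + 1)))
    (h1 : θ₁ = Real.pi * (μ + 1) / (2 * (2 * μ + 1)))
    (φ : ℝ)
    (j₀ j₁ : ℕ) (hj : j₀ = j₁) :
    Real.cos φ ^ 2 * Real.cos θ₀ ^ (2 * j₀) * Real.sin θ₀ ^ (2 * j₁) /
      (Real.sin φ ^ 2 * Real.cos θ₁ ^ (2 * j₀) * Real.sin θ₁ ^ (2 * j₁) +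
       Real.cos φ ^ 2 * Real.cos θ₀ ^ (2 * j₀) * Real.sin θ₀ ^ (2 * j₁))
      = Real.cos φ ^ 2 := by
  subst hj h1
  obtain ⟨hθ₀_pos, hθ₀_lt⟩ := h0 ▸ pi_mul_div_mem_Ioo hμ
  have hcos : 0 < cos θ₀ := cos_pos_of_mem_Ioo ⟨by linarith, hθ₀_lt⟩
  have hsin : 0 < sin θ₀ := sin_pos_of_pos_of_lt_pi hθ₀_pos (by linarith)
  rw [pi_mul_succ_div_eq_pi_div_two_sub, ← h0]
  simp only [mul_assoc]
  rw [cos_pow_mul_sin_pow_pi_div_two_sub]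
  exact mul_div_add_mul_of_add_eq_one (sin_sq_add_cos_sq φ) (by positivity)

theorem reversal (μ : ℕ) (hμ : 1 ≤ μ)
    (θ₀ θ₁ : ℝ)
    (h0 : θ₀ = Real.pi * μ / (2 * (2 * μ + 1)))
    (h1 : θ₁ = Real.pi * (μ + 1) / (2 * (2 * μ + 1)))
    (φ : ℝ) (hφ : φ ∈ Set.Ioo 0 (Real.pi / 2))
    (j₀ j₁ : ℕ) (hj : j₀ = j₁) :
    Real.cos φ ^ 2 * Real.cos θ₀ ^ (2 * j₀) * Real.sin θ₀ ^ (2 * j₁) /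
      (Real.sin φ ^ 2 * Real.cos θ₁ ^ (2 * j₀) * Real.sin θ₁ ^ (2 * j₁) +
       Real.cos φ ^ 2 * Real.cos θ₀ ^ (2 * j₀) * Real.sin θ₀ ^ (2 * j₁))
      = Real.cos φ ^ 2 :=
  reversal_general μ hμ θ₀ θ₁ h0 h1 φ j₀ j₁ hj
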